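/- Let m ≥ 2 and let Ã be the m×m real matrix with Ã₁₁ = Ã_{mm} = 1, Ã_{ii} = 2 for 1 < i < m, Ã_{i,i+1} = Ã_{i+1,i} = 1 for 1 ≤ i ≤ m−1, and all other entries zero. Then the Krylov matrix [e₁, Ã e₁, Ã² e₁, …, Ã^{m−1} e₁] is upper triangular with all diagonal entries equal to 1; in particular it is invertible. -/
import Mathlib


open Matrix

/-- The `m×m` matrix `Ã` with `Ã₁₁ = Ã_{mm} = 1`, `Ã_{ii} = 2` for `1 < i < m`,
`Ã_{i,i+1} = Ã_{i+1,i} = 1`, and all other entries zero. -/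
def Atil (m : ℕ) : Matrix (Fin m) (Fin m) ℝ :=
  Matrix.of fun i j =>
    if i = j then (if (i : ℕ) = 0 ∨ (i : ℕ) + 1 = m then 1 else 2)
    else if (i : ℕ) + 1 = (j : ℕ) ∨ (j : ℕ) + 1 = (i : ℕ) then 1
    else 0

/-- The Krylov matrix `[e₁, Ã e₁, …, Ã^{m-1} e₁]` (whose `(k+1)`-st column is `Ã^k e₁`). -/
def KrylovTil (m : ℕ) (hm : 0 < m) : Matrix (Fin m) (Fin m) ℝ :=
  Matrix.of fun i k => (Atil m ^ (k : ℕ)).mulVec (Pi.single ⟨0, hm⟩ 1) i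

lemma Atil_eq_zero {m : ℕ} (i j : Fin m) (h1 : (i : ℕ) ≠ j)
    (h2 : (i : ℕ) + 1 ≠ j) (h3 : (j : ℕ) + 1 ≠ i) : Atil m i j = 0 := by
  simp only [Atil, of_apply]
  rw [if_neg (by rw [Fin.ext_iff]; omega), if_neg (by omega)]

lemma krylov_aux (m : ℕ) (hm : 0 < m) (k : ℕ) :
    (∀ i : Fin m, k < (i : ℕ) → (Atil m ^ k).mulVec (Pi.single ⟨0, hm⟩ 1) i = 0) ∧
    (∀ i : Fin m, (i : ℕ) = k → (Atil m ^ k).mulVec (Pi.single ⟨0, hm⟩ 1) i = 1) := by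
  induction k with
  | zero =>
    constructor
    · intro i hi
      simp only [pow_zero, one_mulVec]
      rw [Pi.single_apply, if_neg]
      intro h; simp [Fin.ext_iff] at h; omega
    · intro i hi
      have : i = ⟨0, hm⟩ := Fin.ext hi
      simp [pow_zero, one_mulVec, this]
  | succ k ih =>
    have hv : ∀ i : Fin m, (Atil m ^ (k + 1)).mulVec (Pi.single ⟨0, hm⟩ 1) i
        = ∑ j, Atil m i j * (Atil m ^ k).mulVec (Pi.single ⟨0, hm⟩ 1) j := by
      intro i
      rw [pow_succ', ← mulVec_mulVec]
      simp [mulVec, dotProduct]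
    constructor
    · intro i hi
      rw [hv]
      apply Finset.sum_eq_zero
      intro j _
      by_cases hj : k < (j : ℕ)
      · rw [ih.1 j hj, mul_zero]
      · rw [Atil_eq_zero i j (by omega) (by omega) (by omega), zero_mul]
    · intro i hi
      rw [hv]
      have hk : k < m := by omega
      rw [Finset.sum_eq_single_of_mem (⟨k, hk⟩ : Fin m) (Finset.mem_univ _)]
      · rw [ih.2 ⟨k, hk⟩ rfl, mul_one]
        simp only [Atil, of_apply]
        rw [if_neg (by simp only [Fin.ext_iff, Fin.val_mk]; omega), if_pos (by omega)]
      · intro j _ hj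
        have hjk : (j : ℕ) ≠ k := by
          intro h; exact hj (Fin.ext h)
        by_cases hj2 : k < (j : ℕ)
        · rw [ih.1 j hj2, mul_zero]
        · rw [Atil_eq_zero i j (by omega) (by omega) (by omega), zero_mul]

/-- The Krylov matrix of `Ã` is upper triangular with all diagonal entries `1`;
in particular it is invertible. -/
theorem stmt10 (m : ℕ) (hm : 2 ≤ m) :
    (∀ i k : Fin m, (k : ℕ) < (i : ℕ) → KrylovTil m (by omega) i k = 0) ∧
    (∀ k : Fin m, KrylovTil m (by omega) k k = 1) ∧
    IsUnit (KrylovTil m (by omega)) := by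
  have hm0 : 0 < m := by omega
  have h1 : ∀ i k : Fin m, (k : ℕ) < (i : ℕ) → KrylovTil m hm0 i k = 0 := by
    intro i k hik
    exact (krylov_aux m hm0 k).1 i hik
  have h2 : ∀ k : Fin m, KrylovTil m hm0 k k = 1 := by
    intro k
    exact (krylov_aux m hm0 k).2 k rfl
  refine ⟨h1, h2, ?_⟩
  rw [Matrix.isUnit_iff_isUnit_det]
  have hdet : (KrylovTil m hm0).det = ∏ i, KrylovTil m hm0 i i := by
    apply Matrix.det_of_upperTriangular
    intro i j hij
    exact h1 i j hij
  rw [hdet]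
  simp [h2]
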